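/- For every positive integer n, the finitely presented groups G_{n+1} = ⟨a, t | a², [tⁱ a t⁻ⁱ, tʲ a t⁻ʲ] for −(n+1) ≤ i < j ≤ n+1⟩ and G_n = ⟨a, t | a², [tⁱ a t⁻ⁱ, tʲ a t⁻ʲ] for −n ≤ i < j ≤ n⟩ are not isomorphic. -/

import Mathlib

namespace CAG

/-- `tⁱ a t⁻ⁱ` in the free group on two generators, with `a` the generator `0` and `t` the
generator `1`. -/
def shiftedLamp (i : ℤ) : FreeGroup (Fin 2) :=
  FreeGroup.of 1 ^ i * FreeGroup.of 0 * FreeGroup.of 1 ^ (-i)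

/-- The relators of the group
`G_n = ⟨a, t | a², [tⁱ a t⁻ⁱ, tʲ a t⁻ʲ] for −n ≤ i < j ≤ n⟩`,
where `[x,y] = x⁻¹y⁻¹xy`. -/
def lamplighterApproxRels (n : ℕ) : Set (FreeGroup (Fin 2)) :=
  {FreeGroup.of 0 * FreeGroup.of 0} ∪
    {w | ∃ i j : ℤ, -(n : ℤ) ≤ i ∧ i < j ∧ j ≤ (n : ℤ) ∧
      w = (shiftedLamp i)⁻¹ * (shiftedLamp j)⁻¹ * shiftedLamp i * shiftedLamp j}

/-- The group `G_n = ⟨a, t | a², [tⁱ a t⁻ⁱ, tʲ a t⁻ʲ] for −n ≤ i < j ≤ n⟩`. -/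
abbrev lamplighterApprox (n : ℕ) := PresentedGroup (lamplighterApproxRels n)

end CAG

/-!
The relators of `G_n` are among those of `G_{n+1}`, so `G_{n+1}` is a quotient of `G_n`. For a
finitely generated group, a quotient isomorphic to the group itself has exactly as many
homomorphisms to a finite group `H` as the group, so every homomorphism to `H` factors through
the quotient. This fails for `H = Perm (ZMod (2d+1))`, `d = 2n+1`, with `a ↦ swap 0 d` and
`t ↦ (· + 1)`: then `tⁱ a t⁻ⁱ ↦ swap i (i+d)`, and two such transpositions are disjoint for
`0 < j - i < d`, but overlap in one point for `j - i = d`, i.e. for `(i, j) = (-n, n+1)`.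
-/

namespace CAG

open Equiv Function

theorem not_nonempty_mulEquiv_of_surjective_of_map_ne_one {G Q H : Type*} [Group G] [Group Q]
    [Group H] [Finite (G →* H)] {p : G →* Q} (hp : Surjective p) {f : G →* H} {x : G}
    (hpx : p x = 1) (hfx : f x ≠ 1) : ¬ Nonempty (Q ≃* G) := by
  rintro ⟨e⟩
  have : Finite (Q →* H) := .of_equiv _ e.monoidHomCongrLeftEquiv.symm
  have hinj : Injective fun g : Q →* H => g.comp p := fun _ _ h => (MonoidHom.cancel_right hp).1 h
  obtain ⟨g, rfl⟩ := (Finite.injective_iff_surjective_of_equiv e.monoidHomCongrLeftEquiv).1 hinj f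
  exact hfx (by simp [hpx])

instance {α H : Type*} [Finite α] [Group H] [Finite H] (rels : Set (FreeGroup α)) :
    Finite (PresentedGroup rels →* H) :=
  .of_injective (fun f x => f (.of x)) fun _ _ h => PresentedGroup.ext (congrFun h)

theorem inv_mul_inv_mul_mul_eq_one_iff {G : Type*} [Group G] {x y : G} :
    x⁻¹ * y⁻¹ * x * y = 1 ↔ Commute x y := by
  rw [← Commute.inv_inv_iff, ← commutatorElement_eq_one_iff_commute, commutatorElement_def,
    inv_inv, inv_inv]

theorem not_commute_swap_swap {α : Type*} [DecidableEq α] {a b c : α} (hab : a ≠ b) (hac : a ≠ c)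
    (hbc : b ≠ c) : ¬ Commute (swap a b) (swap b c) := by
  intro h
  have := congr($(h.eq) b)
  simp only [Perm.mul_apply, swap_apply_left, swap_apply_right,
    swap_apply_of_ne_of_ne hac.symm hbc.symm, swap_apply_of_ne_of_ne hab hac] at this
  exact hac this.symm

theorem ZMod.intCast_injOn_Ico (m : ℕ) (a : ℤ) :
    Set.InjOn (Int.cast : ℤ → ZMod m) (Set.Ico a (a + m)) := by
  intro x hx y hy hxy
  rw [ZMod.intCast_eq_intCast_iff_dvd_sub] at hxy
  have := Int.eq_zero_of_dvd_of_natAbs_lt_natAbs hxy (by simp at hx hy; omega)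
  omega

def lampRelator (i j : ℤ) : FreeGroup (Fin 2) :=
  (shiftedLamp i)⁻¹ * (shiftedLamp j)⁻¹ * shiftedLamp i * shiftedLamp j

theorem lampRelator_mem_lamplighterApproxRels {n : ℕ} {i j : ℤ} (hi : -(n : ℤ) ≤ i) (hij : i < j)
    (hj : j ≤ n) : lampRelator i j ∈ lamplighterApproxRels n :=
  .inr ⟨i, j, hi, hij, hj, rfl⟩

theorem lamplighterApproxRels_mono : Monotone lamplighterApproxRels := by
  rintro m n hmn r (h | ⟨i, j, hi, hij, hj, rfl⟩)
  · exact .inl h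
  · exact lampRelator_mem_lamplighterApproxRels (by omega) hij (by omega)

def lamplighterApproxMap {m n : ℕ} (h : m ≤ n) : lamplighterApprox m →* lamplighterApprox n :=
  PresentedGroup.map (.id _) fun _ hr => lamplighterApproxRels_mono h hr

theorem lamplighterApproxMap_mk {m n : ℕ} (h : m ≤ n) (w : FreeGroup (Fin 2)) :
    lamplighterApproxMap h (PresentedGroup.mk _ w) = PresentedGroup.mk _ w :=
  rfl

theorem lamplighterApproxMap_surjective {m n : ℕ} (h : m ≤ n) :
    Surjective (lamplighterApproxMap h) := by
  intro x
  obtain ⟨w, rfl⟩ := PresentedGroup.mk_surjective _ x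
  exact ⟨_, lamplighterApproxMap_mk h w⟩

section Transpositions

variable (d : ℕ)

def lampPerm : Fin 2 → Perm (ZMod (2 * d + 1)) :=
  ![swap 0 d, Equiv.addRight 1]

theorem lift_lampPerm_shiftedLamp (i : ℤ) :
    FreeGroup.lift (lampPerm d) (shiftedLamp i) = swap (i : ZMod (2 * d + 1)) ((i + d : ℤ) :) := by
  have ht (k : ℤ) : Equiv.addRight (1 : ZMod (2 * d + 1)) ^ k = Equiv.addRight (k : ZMod _) := by
    simp [zsmul_addRight]
  simp only [shiftedLamp, map_mul, map_zpow, FreeGroup.lift_apply_of, lampPerm,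
    Matrix.cons_val_zero, Matrix.cons_val_one, ht, Int.cast_neg, ← neg_addRight, ← swap_apply_apply]
  simp [add_comm]

variable {d}

theorem commute_lift_lampPerm_shiftedLamp {i j : ℤ} (hij : i < j) (hji : j < i + d) :
    Commute (FreeGroup.lift (lampPerm d) (shiftedLamp i))
      (FreeGroup.lift (lampPerm d) (shiftedLamp j)) := by
  simp only [lift_lampPerm_shiftedLamp]
  apply Perm.Disjoint.commute
  apply Perm.disjoint_swap_swap
  have hinj := ZMod.intCast_injOn_Ico (2 * d + 1) i
  refine List.Nodup.map_on (l := [i, i + d, j, j + d]) (fun x hx y hy hxy => hinj ?_ ?_ hxy) ?_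
  all_goals simp at *; omega

theorem not_commute_lift_lampPerm_shiftedLamp (hd : 0 < d) (i : ℤ) :
    ¬ Commute (FreeGroup.lift (lampPerm d) (shiftedLamp i))
      (FreeGroup.lift (lampPerm d) (shiftedLamp (i + d))) := by
  simp only [lift_lampPerm_shiftedLamp]
  have hinj := ZMod.intCast_injOn_Ico (2 * d + 1) i
  apply not_commute_swap_swap <;> refine hinj.ne ?_ ?_ ?_ <;> simp <;> omega

theorem lift_lampPerm_lampRelator_eq_one_iff (i j : ℤ) :
    FreeGroup.lift (lampPerm d) (lampRelator i j) = 1 ↔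
      Commute (FreeGroup.lift (lampPerm d) (shiftedLamp i))
        (FreeGroup.lift (lampPerm d) (shiftedLamp j)) := by
  simp only [lampRelator, map_mul, map_inv, inv_mul_inv_mul_mul_eq_one_iff]

theorem lift_lampPerm_eq_one_of_mem {k : ℕ} (hkd : 2 * k < d) {r : FreeGroup (Fin 2)}
    (hr : r ∈ lamplighterApproxRels k) : FreeGroup.lift (lampPerm d) r = 1 := by
  rcases hr with rfl | ⟨i, j, hi, hij, hj, rfl⟩
  · simp [lampPerm]
  · exact (lift_lampPerm_lampRelator_eq_one_iff i j).2
      (commute_lift_lampPerm_shiftedLamp hij (by omega))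

def lamplighterApproxToPerm {k : ℕ} (hkd : 2 * k < d) :
    lamplighterApprox k →* Perm (ZMod (2 * d + 1)) :=
  PresentedGroup.toGroup fun _ => lift_lampPerm_eq_one_of_mem hkd

theorem lamplighterApproxToPerm_mk {k : ℕ} (hkd : 2 * k < d) (w : FreeGroup (Fin 2)) :
    lamplighterApproxToPerm hkd (PresentedGroup.mk _ w) = FreeGroup.lift (lampPerm d) w :=
  rfl

end Transpositions

end CAG

open CAG in
theorem lamplighterApprox_not_isomorphic_general (n : ℕ) :
    ¬ Nonempty (lamplighterApprox (n + 1) ≃* lamplighterApprox n) := by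
  have hrel : lampRelator (-n) (n + 1) ∈ lamplighterApproxRels (n + 1) :=
    lampRelator_mem_lamplighterApproxRels (by omega) (by omega) (by omega)
  refine not_nonempty_mulEquiv_of_surjective_of_map_ne_one
    (lamplighterApproxMap_surjective n.le_succ) (x := PresentedGroup.mk _ (lampRelator (-n) (n + 1)))
    (f := lamplighterApproxToPerm (d := 2 * n + 1) (k := n) (by omega)) ?_ ?_
  · rw [lamplighterApproxMap_mk]
    exact PresentedGroup.one_of_mem hrel
  · have hshift : (n : ℤ) + 1 = -n + (2 * n + 1 : ℕ) := by push_cast; ring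
    rw [lamplighterApproxToPerm_mk, Ne, lift_lampPerm_lampRelator_eq_one_iff, hshift]
    exact not_commute_lift_lampPerm_shiftedLamp (by omega) _

open CAG in
/-- For every positive integer `n`, the groups
`G_{n+1} = ⟨a, t | a², [tⁱ a t⁻ⁱ, tʲ a t⁻ʲ] for −(n+1) ≤ i < j ≤ n+1⟩` and
`G_n = ⟨a, t | a², [tⁱ a t⁻ⁱ, tʲ a t⁻ʲ] for −n ≤ i < j ≤ n⟩` are not isomorphic. -/
theorem lamplighterApprox_not_isomorphic (n : ℕ) (hn : 0 < n) :
    ¬ Nonempty (lamplighterApprox (n + 1) ≃* lamplighterApprox n) :=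
  lamplighterApprox_not_isomorphic_general n
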